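/- Assume Hypothesis (*). Suppose K is a d-subgroup of S and x ∈ S is such that K^x is also a d-subgroup. Then x ∈ N_S(K). -/

import Mathlib

/-!
A `d(I)`-subgroup remembers `I` as the set of coordinates on which it is nontrivial. Indeed, for
`u ∈ S_i` the elements `φ^k u` (`k < r`) lie in distinct factors, so they commute, and since
`φ^r = 1` their product is fixed by `φ`; its `i`-th coordinate is `u_i`, which may be any
element of the simple factor. Conjugation by `x` does not change the set of nontrivial
coordinates, so `K` and `K^x` are `d(I)`-subgroups for the same `I`, that is, `K^x = K`.
-/

namespace EngelPaper

variable {G : Type*}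

/-- The commutator `[a,b] = a⁻¹b⁻¹ab` (left-normed convention of the paper). -/
def pc [Group G] (a b : G) : G := a⁻¹ * b⁻¹ * a * b

/-- The left-normed Engel commutator `[x, g, g, ..., g]` with `g` repeated `n` times. -/
def engel [Group G] (g x : G) : ℕ → G
  | 0 => x
  | n + 1 => pc (engel g x n) g

/-- The subgroup `E_n(g)` generated by all `[x, g, ..., g]` (`g` repeated `n` times), `x ∈ G`. -/
def Esub [Group G] (g : G) (n : ℕ) : Subgroup G :=
  Subgroup.closure { y | ∃ x : G, y = engel g x n }

/-- The left-normed Engel commutator `[x, α, ..., α]` (`α` repeated `n` times) for an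
automorphism `α`, computed in the semidirect product `G⟨α⟩`; it lies in `G` and equals the
value of this function. -/
def engelAut [Group G] (α : MulAut G) (x : G) : ℕ → G
  | 0 => x
  | n + 1 => (engelAut α x n)⁻¹ * α (engelAut α x n)

/-- The subgroup `E_{G,n}(α)` generated by all `[x, α, ..., α]`, `x ∈ G`. -/
def EsubAut [Group G] (α : MulAut G) (n : ℕ) : Subgroup G :=
  Subgroup.closure { y | ∃ x : G, y = engelAut α x n }

theorem normal_sSup_of_conj_invariant [Group G] {s : Set (Subgroup G)}
    (h : ∀ N ∈ s, ∀ g : G, Subgroup.map (MulAut.conj g).toMonoidHom N ∈ s) :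
    (sSup s).Normal := by
  constructor
  intro x hx g
  have hle : sSup s ≤ (sSup s).comap ((MulAut.conj g).toMonoidHom) := by
    refine sSup_le ?_
    intro N hN y hy
    simp only [Subgroup.mem_comap]
    exact le_sSup (h N hN g) ⟨y, hy, rfl⟩
  have := hle hx
  simpa [MulAut.conj_apply] using this

theorem normal_sSup [Group G] {s : Set (Subgroup G)}
    (h : ∀ N ∈ s, N.Normal) : (sSup s).Normal := by
  constructor
  intro x hx g
  have hle : sSup s ≤ (sSup s).comap ((MulAut.conj g).toMonoidHom) := by
    refine sSup_le ?_
    intro N hN y hy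
    simp only [Subgroup.mem_comap, MulAut.conj_apply, MulEquiv.coe_toMonoidHom]
    exact le_sSup hN ((h N hN).conj_mem y hy g)
  have := hle hx
  simpa [MulAut.conj_apply] using this

/-- The Fitting subgroup: the subgroup generated by all nilpotent normal subgroups. -/
def fitting (G : Type*) [Group G] : Subgroup G :=
  sSup { N : Subgroup G | N.Normal ∧ Group.IsNilpotent N }

theorem fitting_normal (G : Type*) [Group G] : (fitting G).Normal :=
  normal_sSup fun _ hN => hN.1

/-- One step of the Fitting series: the inverse image of the Fitting subgroup of the quotient. -/
def fitStep (G : Type*) [Group G] (N : { N : Subgroup G // N.Normal }) :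
    { N : Subgroup G // N.Normal } :=
  letI := N.2
  ⟨Subgroup.comap (QuotientGroup.mk' N.1) (fitting (G ⧸ N.1)),
    (fitting_normal (G ⧸ N.1)).comap _⟩

/-- The Fitting series `F_0(G) = 1`, `F_{k+1}(G)/F_k(G) = F(G/F_k(G))`. -/
def fitSeries (G : Type*) [Group G] (n : ℕ) : Subgroup G :=
  ((fitStep G)^[n] ⟨⊥, inferInstance⟩).1

/-- The Fitting height: the least `h` with `F_h(G) = G`. -/
noncomputable def fittingHeight (G : Type*) [Group G] : ℕ :=
  sInf { h | fitSeries G h = ⊤ }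




/-- A subgroup is subnormal if it can be joined to the whole group
by a chain of successively normal subgroups. -/
def IsSubnormal [Group G] (H : Subgroup G) : Prop :=
  ∃ (n : ℕ) (c : ℕ → Subgroup G), c 0 = H ∧ c n = ⊤ ∧
    ∀ i, c i ≤ c (i + 1) ∧ ∀ x ∈ c (i + 1), ∀ y ∈ c i, x * y * x⁻¹ ∈ c i

/-- A group is quasisimple if it is perfect and its central quotient
is a nonabelian simple group. -/
def IsQuasisimple (G : Type*) [Group G] : Prop :=
  commutator G = ⊤ ∧
    IsSimpleGroup (G ⧸ Subgroup.center G) ∧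
    ∃ a b : G ⧸ Subgroup.center G, a * b ≠ b * a

theorem map_center_eq {H : Type*} [Group G] [Group H] (e : G ≃* H) :
    (Subgroup.center G).map e.toMonoidHom = Subgroup.center H := by
  ext x
  simp only [Subgroup.mem_map, Subgroup.mem_center_iff, MulEquiv.coe_toMonoidHom]
  constructor
  · rintro ⟨y, hy, rfl⟩ h
    obtain ⟨z, rfl⟩ := e.surjective h
    rw [← map_mul, ← map_mul, hy z]
  · intro hx
    refine ⟨e.symm x, fun z => ?_, e.apply_symm_apply x⟩
    apply e.injective
    rw [map_mul, map_mul, e.apply_symm_apply]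
    have := hx (e z)
    rw [this]

theorem isQuasisimple_congr {H : Type*} [Group G] [Group H] (e : G ≃* H)
    (h : IsQuasisimple G) : IsQuasisimple H := by
  obtain ⟨hcomm, hsimp, a, b, hab⟩ := h
  have hcenter : (Subgroup.center G).map e.toMonoidHom = Subgroup.center H := map_center_eq e
  have equot : (G ⧸ Subgroup.center G) ≃* (H ⧸ Subgroup.center H) :=
    QuotientGroup.congr (Subgroup.center G) (Subgroup.center H) e hcenter
  refine ⟨?_, ?_, equot a, equot b, ?_⟩
  · have h1 : Subgroup.map e.toMonoidHom (commutator G) = commutator H := by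
      rw [commutator_def, commutator_def, Subgroup.map_commutator,
        Subgroup.map_top_of_surjective _ e.surjective]
    rw [← h1, hcomm, Subgroup.map_top_of_surjective _ e.surjective]
  · haveI := hsimp
    haveI : Nontrivial (H ⧸ Subgroup.center H) := by
      rcases hsimp.exists_pair_ne with ⟨u, v, huv⟩
      exact ⟨equot u, equot v, fun hh => huv (equot.injective hh)⟩
    exact IsSimpleGroup.isSimpleGroup_of_surjective equot.toMonoidHom equot.surjective
  · intro hcon
    apply hab
    apply equot.injective
    rw [map_mul, map_mul, hcon]

theorem isSubnormal_map_conj [Group G] {N : Subgroup G} (hN : IsSubnormal N) (w : G) :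
    IsSubnormal (N.map (MulAut.conj w).toMonoidHom) := by
  obtain ⟨n, c, h0, hn, hc⟩ := hN
  refine ⟨n, fun i => (c i).map (MulAut.conj w).toMonoidHom, by simp only [h0], ?_, ?_⟩
  · simp only [hn]
    exact Subgroup.map_top_of_surjective _ (MulAut.conj w).surjective
  · intro i
    refine ⟨Subgroup.map_mono (hc i).1, ?_⟩
    rintro x ⟨x', hx', rfl⟩ y ⟨y', hy', rfl⟩
    refine ⟨x' * y' * x'⁻¹, (hc i).2 x' hx' y' hy', ?_⟩
    simp [map_mul, map_inv]

/-- The generalized Fitting subgroup: the product of the Fitting subgroup and all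
subnormal quasisimple subgroups. -/
def genFitting (G : Type*) [Group G] : Subgroup G :=
  fitting G ⊔ sSup { N : Subgroup G | IsSubnormal N ∧ IsQuasisimple N }

theorem genFitting_normal (G : Type*) [Group G] : (genFitting G).Normal := by
  have h2 : (sSup { N : Subgroup G | IsSubnormal N ∧ IsQuasisimple N }).Normal := by
    apply normal_sSup_of_conj_invariant
    rintro N ⟨hsub, hqs⟩ g
    refine ⟨isSubnormal_map_conj hsub g, ?_⟩
    exact isQuasisimple_congr
      (Subgroup.equivMapOfInjective N _ (MulAut.conj g).injective) hqs
  haveI := fitting_normal G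
  haveI := h2
  exact Subgroup.sup_normal _ _


/-- One step of the generalized Fitting series. -/
def genFitStep (G : Type*) [Group G] (N : { N : Subgroup G // N.Normal }) :
    { N : Subgroup G // N.Normal } :=
  letI := N.2
  ⟨Subgroup.comap (QuotientGroup.mk' N.1) (genFitting (G ⧸ N.1)),
    (genFitting_normal (G ⧸ N.1)).comap _⟩

/-- The generalized Fitting series `F*_0(G) = 1`, `F*_{i+1}(G)/F*_i(G) = F*(G/F*_i(G))`. -/
def genFitSeries (G : Type*) [Group G] (n : ℕ) : Subgroup G :=
  ((genFitStep G)^[n] ⟨⊥, inferInstance⟩).1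

/-- The generalized Fitting height: the least `h` with `F*_h(G) = G`. -/
noncomputable def genFittingHeight (G : Type*) [Group G] : ℕ :=
  sInf { h | genFitSeries G h = ⊤ }

/-- The soluble radical: the subgroup generated by all soluble normal subgroups. -/
def solRadical (G : Type*) [Group G] : Subgroup G :=
  sSup { N : Subgroup G | N.Normal ∧ IsSolvable N }

theorem solRadical_normal (G : Type*) [Group G] : (solRadical G).Normal :=
  normal_sSup fun _ hN => hN.1

/-- A group is a nonabelian simple group. -/
def IsNonabelianSimple (G : Type*) [Group G] : Prop :=
  IsSimpleGroup G ∧ ∃ a b : G, a * b ≠ b * a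

/-- A group is the (internal) direct product of finitely many nonabelian simple subgroups. -/
def IsProdOfSimples (Q : Type*) [Group Q] : Prop :=
  ∃ (k : ℕ) (H : Fin k → Subgroup Q),
    (∀ i, (H i).Normal) ∧ (∀ i, IsNonabelianSimple (H i)) ∧
    iSup H = ⊤ ∧ iSupIndep H

/-- For `A ≤ B`, the factor `B/A` is soluble (stated for every proof that the
corresponding subgroup is normal). -/
def SolubleFactor [Group G] (A B : Subgroup G) : Prop :=
  ∀ h : (A.subgroupOf B).Normal, letI := h; IsSolvable (B ⧸ A.subgroupOf B)

/-- For `A ≤ B`, the factor `B/A` is a direct product of nonabelian simple groups. -/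
def SimpleProdFactor [Group G] (A B : Subgroup G) : Prop :=
  ∀ h : (A.subgroupOf B).Normal, letI := h; IsProdOfSimples (B ⧸ A.subgroupOf B)

/-- For `A ≤ B`, the factor `B/A` is nonabelian simple. -/
def NonabelianSimpleFactor [Group G] (A B : Subgroup G) : Prop :=
  ∀ h : (A.subgroupOf B).Normal, letI := h; IsNonabelianSimple (B ⧸ A.subgroupOf B)

/-- For `A ≤ B, B'`, the factors `B/A` and `B'/A` are isomorphic. -/
def IsoFactor [Group G] (A B B' : Subgroup G) : Prop :=
  ∀ (h : (A.subgroupOf B).Normal) (h' : (A.subgroupOf B').Normal),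
    letI := h; letI := h'
    Nonempty ((B ⧸ A.subgroupOf B) ≃* (B' ⧸ A.subgroupOf B'))

open scoped Classical in
/-- The nonsoluble length `λ(G)`: the minimum number of nonsoluble factors in a normal
series each of whose factors either is soluble or is a direct product of nonabelian
simple groups. -/
noncomputable def nonsolLength (G : Type*) [Group G] : ℕ :=
  sInf { k | ∃ (n : ℕ) (c : ℕ → Subgroup G), c 0 = ⊥ ∧ c n = ⊤ ∧
    (∀ i, c i ≤ c (i + 1)) ∧ (∀ i, (c i).Normal) ∧
    (∀ i < n, SolubleFactor (c i) (c (i + 1)) ∨ SimpleProdFactor (c i) (c (i + 1))) ∧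
    k = ((Finset.range n).filter fun i => ¬ SolubleFactor (c i) (c (i + 1))).card }

/-- `R_i(G)`: the maximal normal subgroup of `G` of nonsoluble length at most `i`. -/
noncomputable def Rsub (G : Type*) [Group G] (i : ℕ) : Subgroup G :=
  sSup { N : Subgroup G | N.Normal ∧ nonsolLength N ≤ i }

/-- One step of the upper nonsoluble series: from `R_{i-1}` to `L_i`
(the inverse image of the generalized Fitting subgroup of the quotient). -/
def unsStepL (G : Type*) [Group G] (R : { N : Subgroup G // N.Normal }) :
    { N : Subgroup G // N.Normal } :=
  letI := R.2
  ⟨Subgroup.comap (QuotientGroup.mk' R.1) (genFitting (G ⧸ R.1)),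
    (genFitting_normal (G ⧸ R.1)).comap _⟩

/-- One step of the upper nonsoluble series: from `L_i` to `R_i`
(the inverse image of the soluble radical of the quotient). -/
def unsStepR (G : Type*) [Group G] (L : { N : Subgroup G // N.Normal }) :
    { N : Subgroup G // N.Normal } :=
  letI := L.2
  ⟨Subgroup.comap (QuotientGroup.mk' L.1) (solRadical (G ⧸ L.1)),
    (solRadical_normal (G ⧸ L.1)).comap _⟩

/-- The terms `R_i` of the upper nonsoluble series, bundled with normality. -/
def unsRAux (G : Type*) [Group G] (n : ℕ) : { N : Subgroup G // N.Normal } :=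
  (fun P => unsStepR G (unsStepL G P))^[n] ⟨solRadical G, solRadical_normal G⟩

/-- The terms `R_i` of the upper nonsoluble series of `G`:
`R_0` is the soluble radical and `R_i/L_i` is the soluble radical of `G/L_i`. -/
def unsRsub (G : Type*) [Group G] (n : ℕ) : Subgroup G := (unsRAux G n).1

/-- The terms `L_i` of the upper nonsoluble series of `G`: `L_0 = 1` and
`L_i/R_{i-1} = F*(G/R_{i-1})` for `i ≥ 1`. -/
def unsLsub (G : Type*) [Group G] : ℕ → Subgroup G
  | 0 => ⊥
  | n + 1 => (unsStepL G (unsRAux G n)).1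

/-- `T` is (the full inverse image in `G` of) one of the simple factors of the
section `U_i = L_i/R_{i-1}` of the upper nonsoluble series (`i ≥ 1`): it satisfies
`R_{i-1} ≤ T ≤ L_i`, it is normalized by `L_i`, and `T/R_{i-1}` is nonabelian simple. -/
def IsSimpleFactor (G : Type*) [Group G] (i : ℕ) (T : Subgroup G) : Prop :=
  unsRsub G (i - 1) ≤ T ∧ T ≤ unsLsub G i ∧
  (∀ x ∈ unsLsub G i, ∀ t ∈ T, x * t * x⁻¹ ∈ T) ∧
  NonabelianSimpleFactor (unsRsub G (i - 1)) T

/-- The kernel `K_i` of the permutation action of `G` by conjugation on the set of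
simple factors of the section `U_i` of the upper nonsoluble series. -/
def unsKernel (G : Type*) [Group G] (i : ℕ) : Subgroup G where
  carrier := { w | ∀ T : Subgroup G, IsSimpleFactor G i T → ∀ x : G, x ∈ T ↔ w * x * w⁻¹ ∈ T }
  one_mem' := by intro T _ x; simp
  mul_mem' := by
    intro a b ha hb T hT x
    have h1 := hb T hT x
    have h2 := ha T hT (b * x * b⁻¹)
    have h3 : a * (b * x * b⁻¹) * a⁻¹ = (a * b) * x * (a * b)⁻¹ := by group
    rw [h3] at h2
    exact h1.trans h2
  inv_mem' := by
    intro a ha T hT x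
    have h1 := ha T hT (a⁻¹ * x * a)
    have h2 : a * (a⁻¹ * x * a) * a⁻¹ = x := by group
    rw [h2] at h1
    have h3 : a⁻¹ * x * a⁻¹⁻¹ = a⁻¹ * x * a := by rw [inv_inv]
    rw [h3]
    exact h1.symm

/-- The lexicographic order on positive integers from the paper: `a ≺ b` if for some
prime `p` the multiplicities of all primes `q < p` agree in `a` and `b` and the
multiplicity of `p` in `a` is smaller than in `b`. -/
def lexPrimeLt (a b : ℕ) : Prop :=
  ∃ p : ℕ, p.Prime ∧ (∀ q < p, q.Prime → a.factorization q = b.factorization q) ∧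
    a.factorization p < b.factorization p


/-- The subgroup of a direct product consisting of the elements supported on `J`. -/
def suppSubgroup {ι : Type*} {Δ : ι → Type*} [∀ i, Group (Δ i)] (J : Set ι) :
    Subgroup (∀ i, Δ i) where
  carrier := { x | ∀ i, i ∉ J → x i = 1 }
  one_mem' := fun _ _ => rfl
  mul_mem' := by
    intro a b ha hb i hi
    have := ha i hi; have := hb i hi
    simp_all [Pi.mul_apply]
  inv_mem' := by
    intro a ha i hi
    have := ha i hi
    simp_all [Pi.inv_apply]

/-- The `i`-th factor `S_i` of the direct product `S = S_1 × ⋯ × S_r`. -/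
def factorSub {ι : Type*} {Δ : ι → Type*} [∀ i, Group (Δ i)] (i : ι) :
    Subgroup (∀ j, Δ j) :=
  suppSubgroup {i}

/-- The homomorphism of a direct product killing all coordinates outside `I`. -/
def restrictSupp {ι : Type*} {Δ : ι → Type*} [∀ i, Group (Δ i)] (I : Set ι)
    [DecidablePred (· ∈ I)] : (∀ j, Δ j) →* (∀ j, Δ j) where
  toFun x j := if j ∈ I then x j else 1
  map_one' := by funext j; by_cases h : j ∈ I <;> simp [h]
  map_mul' := by
    intro a b; funext j; by_cases h : j ∈ I <;> simp [h]

/-- The fixed-point subgroup (in `S`) of an automorphism `φ`;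
for `φ` as in Hypothesis (*), this is the diagonal `D = C_S(φ)`. -/
def fixedSub {S : Type*} [Group S] (φ : MulAut S) : Subgroup S where
  carrier := { x | φ x = x }
  one_mem' := map_one φ
  mul_mem' := by
    intro a b ha hb
    simp only [Set.mem_setOf_eq, map_mul] at *
    rw [ha, hb]
  inv_mem' := by
    intro a ha
    simp only [Set.mem_setOf_eq, map_inv] at *
    rw [ha]

/-- The `d(I)`-subgroup determined by `φ` and a set of indices `I`: the diagonal
(with respect to `φ`) in the product of the factors `S_i`, `i ∈ I`; equivalently, the
image of the full diagonal `D = C_S(φ)` under the projection onto the coordinates in `I`. -/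
def dSubgroup {r : ℕ} {Δ : Type*} [Group Δ] (φ : MulAut (Fin r → Δ)) (I : Finset (Fin r)) :
    Subgroup (Fin r → Δ) :=
  Subgroup.map (restrictSupp (↑I : Set (Fin r))) (fixedSub φ)

/-- `K` is a `d`-subgroup (with respect to `φ`): a `d(I)`-subgroup for some nonempty `I`. -/
def IsDSubgroup {r : ℕ} {Δ : Type*} [Group Δ] (φ : MulAut (Fin r → Δ))
    (K : Subgroup (Fin r → Δ)) : Prop :=
  ∃ I : Finset (Fin r), I.Nonempty ∧ K = dSubgroup φ I

end EngelPaper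

section NormalizerOfDSubgroup

open EngelPaper Fin.NatCast

def coordSupport {ι : Type*} {Δ : ι → Type*} [∀ i, Group (Δ i)]
    (H : Subgroup (∀ i, Δ i)) : Set ι :=
  {i | ∃ h ∈ H, h i ≠ 1}

theorem coordSupport_map_conj {ι : Type*} {Δ : ι → Type*} [∀ i, Group (Δ i)]
    (H : Subgroup (∀ i, Δ i)) (g : ∀ i, Δ i) :
    coordSupport (H.map (MulAut.conj g).toMonoidHom) = coordSupport H := by
  ext i
  simp [coordSupport, MulAut.conj_apply, conj_eq_one_iff]

theorem eq_mulSingle_of_mem_factorSub {ι : Type*} [DecidableEq ι] {Δ : ι → Type*}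
    [∀ i, Group (Δ i)] {i : ι} {x : ∀ j, Δ j} (hx : x ∈ factorSub i) :
    x = Pi.mulSingle i (x i) := by
  ext j
  by_cases hj : j = i
  · subst hj; simp
  · simp [hj, hx j hj]

theorem commute_of_mem_factorSub {ι : Type*} {Δ : ι → Type*} [∀ i, Group (Δ i)] {p q : ι}
    (hpq : p ≠ q) {x y : ∀ i, Δ i} (hx : x ∈ factorSub p) (hy : y ∈ factorSub q) :
    Commute x y := by
  classical
  rw [eq_mulSingle_of_mem_factorSub hx, eq_mulSingle_of_mem_factorSub hy]
  exact Pi.mulSingle_commute hpq _ _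

theorem MulAut.apply_prod_orbit_eq_self {M : Type*} [Monoid M] (σ : MulAut M) {n : ℕ}
    (hσ : σ ^ n = 1) (u : M) (hcomm : ∀ k, 0 < k → k < n → Commute u ((σ ^ k) u)) :
    σ ((List.range n).map fun k => (σ ^ k) u).prod =
      ((List.range n).map fun k => (σ ^ k) u).prod := by
  cases n with
  | zero => simp
  | succ m =>
    set P := ((List.range m).map fun k => (σ ^ (k + 1)) u).prod
    have hP : Commute u P := Commute.list_prod_right _ _ <| by
      simpa using fun k hk => hcomm (k + 1) k.succ_pos (by omega)
    calc σ ((List.range (m + 1)).map fun k => (σ ^ k) u).prod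
        = ((List.range (m + 1)).map fun k => (σ ^ (k + 1)) u).prod := by
          simp only [map_list_prod, List.map_map, Function.comp_def, pow_succ', MulAut.mul_apply]
      _ = P * u := by rw [List.prod_range_succ, hσ, MulAut.one_apply]
      _ = u * P := hP.eq.symm
      _ = ((List.range (m + 1)).map fun k => (σ ^ k) u).prod := by
          rw [List.prod_range_succ' (fun k => (σ ^ k) u), pow_zero, MulAut.one_apply]

theorem Fin.add_natCast_ne_self {r : ℕ} [NeZero r] (i : Fin r) {k : ℕ} (hk0 : 0 < k)
    (hkr : k < r) : i + (k : Fin r) ≠ i := by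
  rw [Ne, add_eq_left, Fin.natCast_eq_zero]
  exact fun hdvd => (Nat.le_of_dvd hk0 hdvd).not_gt hkr

variable {Δ : Type*} [Group Δ] {r : ℕ} [NeZero r] {φ : MulAut (Fin r → Δ)}

theorem pow_apply_mem_factorSub
    (hperm : ∀ i : Fin r,
      Subgroup.map φ.toMonoidHom (factorSub (Δ := fun _ : Fin r => Δ) i) = factorSub (i + 1))
    {i : Fin r} {u : Fin r → Δ} (hu : u ∈ factorSub i) (k : ℕ) :
    (φ ^ k) u ∈ factorSub (i + k) := by
  induction k with
  | zero => simpa using hu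
  | succ k ih =>
    rw [pow_succ', MulAut.mul_apply, Nat.cast_succ, ← add_assoc, ← hperm]
    exact ⟨_, ih, rfl⟩

theorem exists_mem_fixedSub_apply_eq (hord : orderOf φ = r)
    (hperm : ∀ i : Fin r,
      Subgroup.map φ.toMonoidHom (factorSub (Δ := fun _ : Fin r => Δ) i) = factorSub (i + 1))
    (i : Fin r) (a : Δ) :
    ∃ h ∈ fixedSub φ, h i = a := by
  classical
  set u : Fin r → Δ := Pi.mulSingle i a
  have hu : u ∈ factorSub i := fun j hj => Pi.mulSingle_eq_of_ne (M := fun _ => Δ) hj a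
  refine ⟨((List.range r).map fun k => (φ ^ k) u).prod, ?_, ?_⟩
  · exact MulAut.apply_prod_orbit_eq_self φ (orderOf_dvd_iff_pow_eq_one.mp hord.dvd) u
      fun k hk0 hkr => commute_of_mem_factorSub (i.add_natCast_ne_self hk0 hkr).symm hu
        (pow_apply_mem_factorSub hperm hu k)
  · obtain ⟨m, rfl⟩ := Nat.exists_eq_succ_of_ne_zero (NeZero.ne r)
    rw [Pi.list_prod_apply, List.map_map, List.prod_range_succ', List.prod_eq_one, mul_one]
    · simp [u]
    · simp only [List.mem_map, List.mem_range, Function.comp_apply]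
      rintro _ ⟨k, hk, rfl⟩
      exact pow_apply_mem_factorSub hperm hu (k + 1) i
        (i.add_natCast_ne_self k.succ_pos (by omega)).symm

theorem coordSupport_dSubgroup [Nontrivial Δ] (hord : orderOf φ = r)
    (hperm : ∀ i : Fin r,
      Subgroup.map φ.toMonoidHom (factorSub (Δ := fun _ : Fin r => Δ) i) = factorSub (i + 1))
    (I : Finset (Fin r)) :
    coordSupport (dSubgroup φ I) = I := by
  ext i
  constructor
  · rintro ⟨_, ⟨g, -, rfl⟩, hne⟩
    by_contra hi
    exact hne (if_neg hi)
  · intro hi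
    obtain ⟨a, ha⟩ := exists_ne (1 : Δ)
    obtain ⟨g, hg, hgi⟩ := exists_mem_fixedSub_apply_eq hord hperm i a
    refine ⟨restrictSupp I g, ⟨g, hg, rfl⟩, ?_⟩
    rwa [show restrictSupp (I : Set (Fin r)) g i = g i from if_pos hi, hgi]

end NormalizerOfDSubgroup

section Statements

universe u

open EngelPaper

theorem stmt8_general {Δ : Type u} [Group Δ] (hΔ : IsNonabelianSimple Δ)
    (r : ℕ) [NeZero r] (φ : MulAut (Fin r → Δ)) (hord : orderOf φ = r)
    (hperm : ∀ i : Fin r,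
      Subgroup.map φ.toMonoidHom (factorSub (Δ := fun _ : Fin r => Δ) i) = factorSub (i + 1))
    (K : Subgroup (Fin r → Δ)) (hK : IsDSubgroup φ K) (x : Fin r → Δ)
    (hKx : IsDSubgroup φ (Subgroup.map (MulAut.conj x⁻¹).toMonoidHom K)) :
    x ∈ Subgroup.normalizer (K : Set (Fin r → Δ)) := by
  have : Nontrivial Δ := hΔ.1.toNontrivial
  obtain ⟨I, -, rfl⟩ := hK
  obtain ⟨J, -, hJ⟩ := hKx
  obtain rfl : I = J := by
    have hsupp := congrArg coordSupport hJ
    rwa [coordSupport_map_conj, coordSupport_dSubgroup hord hperm,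
      coordSupport_dSubgroup hord hperm, Finset.coe_inj] at hsupp
  rw [← inv_mem_iff, Subgroup.mem_normalizer_iff_map_conj_eq]
  exact hJ

/-- **Lemma 3.5.** Under Hypothesis (*), if `K` and `K^x` are `d`-subgroups then
`x ∈ N_S(K)`. -/
theorem stmt8 {Δ : Type u} [Group Δ] [Finite Δ] (hΔ : IsNonabelianSimple Δ)
    (r : ℕ) [NeZero r] (φ : MulAut (Fin r → Δ)) (hord : orderOf φ = r)
    (hperm : ∀ i : Fin r,
      Subgroup.map φ.toMonoidHom (factorSub (Δ := fun _ : Fin r => Δ) i) = factorSub (i + 1))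
    (K : Subgroup (Fin r → Δ)) (hK : IsDSubgroup φ K) (x : Fin r → Δ)
    (hKx : IsDSubgroup φ (Subgroup.map (MulAut.conj x⁻¹).toMonoidHom K)) :
    x ∈ Subgroup.normalizer (K : Set (Fin r → Δ)) :=
  stmt8_general hΔ r φ hord hperm K hK x hKx

end Statements
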